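/- Let ψ ∈ C²(ℝ^d) satisfy sup_x (|ψ(x)| + |∇ψ(x)| + |D²ψ(x)|)/W(x) < ∞. Then ψ ∈ I_0^W if and only if for all x, y ∈ ℝ^d: Δψ(x) + Δψ(y) − ⟨K(x,y), ∇ψ(x)⟩ − ⟨K(y,x), ∇ψ(y)⟩ = 0. In particular, if ψ ∈ I_0^W then Δψ(x) − ⟨K(x,x), ∇ψ(x)⟩ = 0 for all x. Moreover, if Q ∈ ℝ^d is a constant vector with ⟨Q, K(x,y)⟩ = −⟨Q, K(y,x)⟩ for all x, y, and sup_x (1+|x|)/W(x) < ∞, then every function of the form ψ(x) = ⟨Q, x⟩ + g with g ∈ ℝ belongs to I_0^W. -/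

import Mathlib

/-!
Write `L_μψ(x) = ∫ (Δψ(x) - ⟨K(x,y), ∇ψ(x)⟩) μ(dy)`, so that `∫ L_μψ dμ` is the integral of the
pair density `pairL K ψ` over `μ ⊗ μ`. If the symmetrised density vanishes, this integral is zero by
the symmetry `(x, y) ↦ (y, x)` of `μ ⊗ μ`; the growth bounds on `ψ` and `K` (with `W V^{1-γ} = V`)
make the density `μ ⊗ μ`-integrable for `μ ∈ 𝒫_V`. Conversely, testing against `δ_x` and
`(δ_x + δ_y)/2` recovers the symmetrised density at `(x, y)`. Affine functions with a direction
`Q` in which `K` is antisymmetric have zero Hessian and constant gradient `Q`.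
-/

open MeasureTheory Real Set Filter Metric
open scoped Topology RealInnerProductSpace NNReal ENNReal

noncomputable section

abbrev Ed (d : ℕ) : Type := EuclideanSpace ℝ (Fin d)

variable {d : ℕ}

/-- Second-order partial derivative `∂_i ∂_j φ (x)`. -/
def hess2 (φ : Ed d → ℝ) (x : Ed d) (i j : Fin d) : ℝ :=
  iteratedFDeriv ℝ 2 φ x ![EuclideanSpace.single i 1, EuclideanSpace.single j 1]

/-- The Laplacian. -/
def lap (φ : Ed d → ℝ) (x : Ed d) : ℝ := ∑ i, hess2 φ x i i

/-- The Kolmogorov operator with unit diffusion: `L φ = Δφ + ⟨B, ∇φ⟩`. -/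
def LopI (B : Ed d → Ed d) (φ : Ed d → ℝ) (x : Ed d) : ℝ :=
  lap φ x + ⟪B x, gradient φ x⟫

/-- Membership in `𝒫_V(ℝ^d)`. -/
def memPV (V : Ed d → ℝ) (μ : Measure (Ed d)) : Prop :=
  IsProbabilityMeasure μ ∧ Integrable V μ

/-- Growth bound defining the class of admissible `ψ`. -/
def GrowthW (W ψ : Ed d → ℝ) : Prop :=
  ∃ M : ℝ, ∀ x, |ψ x| + ‖gradient ψ x‖ + ‖iteratedFDeriv ℝ 2 ψ x‖ ≤ M * W x

/-- The convolution drift `b(x,μ) = -∫ K(x,y) μ(dy)`. -/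
def bConv (K : Ed d → Ed d → Ed d) (μ : Measure (Ed d)) (x : Ed d) : Ed d :=
  -∫ y, K x y ∂μ

/-- The class `I_0^W` for the drift `b(x,μ) = -∫ K(x,y) μ(dy)` and `A = I`. -/
def I0Wconv (K : Ed d → Ed d → Ed d) (V W : Ed d → ℝ) (ψ : Ed d → ℝ) : Prop :=
  ContDiff ℝ 2 ψ ∧ GrowthW W ψ ∧
    ∀ μ : Measure (Ed d), memPV V μ →
      ∫ x, LopI (bConv K μ) ψ x ∂μ = 0


section Measures

variable {α : Type*} [MeasurableSpace α] [MeasurableSingletonClass α]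
  {E : Type*} [NormedAddCommGroup E]

def diracMid (x y : α) : Measure α := (2 : ℝ≥0∞)⁻¹ • (Measure.dirac x + Measure.dirac y)

instance (x y : α) : IsProbabilityMeasure (diracMid x y) :=
  ⟨by simp [diracMid, ENNReal.inv_two_add_inv_two]⟩

lemma integrable_diracMid (f : α → E) (x y : α) : Integrable f (diracMid x y) :=
  ((integrable_dirac enorm_lt_top).add_measure (integrable_dirac enorm_lt_top)).smul_measure
    (by simp)

lemma integral_diracMid [NormedSpace ℝ E] [CompleteSpace E] (f : α → E) (x y : α) :
    ∫ z, f z ∂diracMid x y = (2 : ℝ)⁻¹ • (f x + f y) := by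
  rw [diracMid, integral_smul_measure,
    integral_add_measure (integrable_dirac enorm_lt_top) (integrable_dirac enorm_lt_top),
    integral_dirac, integral_dirac]
  norm_num

end Measures

lemma integral_prod_eq_zero_of_add_swap_eq_zero {α E : Type*} [MeasurableSpace α]
    [NormedAddCommGroup E] [NormedSpace ℝ E] {μ : Measure α} [SFinite μ] {f : α × α → E}
    (hf : ∀ x y, f (x, y) + f (y, x) = 0) : ∫ p, f p ∂μ.prod μ = 0 := by
  have hneg : ∫ p, f p ∂μ.prod μ = -∫ p, f p.swap ∂μ.prod μ := by
    rw [← integral_neg]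
    exact integral_congr_ae (.of_forall fun p => eq_neg_of_add_eq_zero_left (hf p.1 p.2))
  rw [integral_prod_swap f] at hneg
  have htwice : (2 : ℝ) • ∫ p, f p ∂μ.prod μ = 0 := by
    rw [two_smul]; nth_rw 1 [hneg]; exact neg_add_cancel _
  exact (smul_eq_zero.mp htwice).resolve_left two_ne_zero

lemma memPV_dirac (V : Ed d → ℝ) (a : Ed d) : memPV V (Measure.dirac a) :=
  ⟨inferInstance, integrable_dirac enorm_lt_top⟩

lemma memPV_diracMid (V : Ed d → ℝ) (x y : Ed d) : memPV V (diracMid x y) :=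
  ⟨inferInstance, integrable_diracMid V x y⟩

lemma abs_hess2_le_norm_iteratedFDeriv (φ : Ed d → ℝ) (x : Ed d) (i j : Fin d) :
    |hess2 φ x i j| ≤ ‖iteratedFDeriv ℝ 2 φ x‖ := by
  have hunit : ∀ k : Fin 2,
      ‖(![EuclideanSpace.single i (1 : ℝ), EuclideanSpace.single j 1] : Fin 2 → Ed d) k‖ = 1 := by
    intro k; fin_cases k <;> simp
  simpa [hess2, hunit] using (iteratedFDeriv ℝ 2 φ x).le_opNorm
    ![EuclideanSpace.single i 1, EuclideanSpace.single j 1]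

lemma abs_lap_le_norm_iteratedFDeriv (φ : Ed d → ℝ) (x : Ed d) :
    |lap φ x| ≤ d * ‖iteratedFDeriv ℝ 2 φ x‖ := by
  calc |lap φ x| ≤ ∑ i, |hess2 φ x i i| := Finset.abs_sum_le_sum_abs _ _
    _ ≤ ∑ _i : Fin d, ‖iteratedFDeriv ℝ 2 φ x‖ :=
        Finset.sum_le_sum fun i _ => abs_hess2_le_norm_iteratedFDeriv φ x i i
    _ = d * ‖iteratedFDeriv ℝ 2 φ x‖ := by simp

lemma continuous_lap {φ : Ed d → ℝ} (hφ : ContDiff ℝ 2 φ) : Continuous (lap φ) :=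
  continuous_finsetSum _ fun _ _ =>
    continuous_eval.comp ((hφ.continuous_iteratedFDeriv le_rfl).prodMk continuous_const)

lemma continuous_gradient {φ : Ed d → ℝ} (hφ : ContDiff ℝ 2 φ) : Continuous (gradient φ) :=
  (LinearIsometryEquiv.continuous _).comp (hφ.continuous_fderiv (by norm_num))

section PairDensity

variable (K : Ed d → Ed d → Ed d) (ψ : Ed d → ℝ)

def pairL (x y : Ed d) : ℝ := lap ψ x - ⟪K x y, gradient ψ x⟫

lemma LopI_bConv_eq_integral_pairL {μ : Measure (Ed d)} [IsProbabilityMeasure μ] {x : Ed d}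
    (hK : Integrable (K x) μ) : LopI (bConv K μ) ψ x = ∫ y, pairL K ψ x y ∂μ := by
  have hinner : ⟪∫ y, K x y ∂μ, gradient ψ x⟫ = ∫ y, ⟪K x y, gradient ψ x⟫ ∂μ := by
    rw [real_inner_comm, ← integral_inner hK]
    exact integral_congr_ae (.of_forall fun y => real_inner_comm _ _)
  unfold pairL
  rw [integral_sub (integrable_const _) (hK.inner_const _), integral_const, LopI, bConv,
    inner_neg_left, hinner]
  simp [sub_eq_add_neg]

lemma integral_LopI_bConv_diracMid (x y : Ed d) :
    ∫ z, LopI (bConv K (diracMid x y)) ψ z ∂diracMid x y =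
      4⁻¹ * (pairL K ψ x x + pairL K ψ x y + pairL K ψ y x + pairL K ψ y y) := by
  simp_rw [LopI_bConv_eq_integral_pairL K ψ (integrable_diracMid _ x y), integral_diracMid,
    smul_eq_mul]
  ring

lemma pairL_add_pairL_swap_eq_zero {V : Ed d → ℝ}
    (h : ∀ μ, memPV V μ → ∫ z, LopI (bConv K μ) ψ z ∂μ = 0) (x y : Ed d) :
    pairL K ψ x y + pairL K ψ y x = 0 := by
  have hdiag : ∀ a, pairL K ψ a a = 0 := fun a => by
    simpa [LopI_bConv_eq_integral_pairL K ψ (integrable_dirac enorm_lt_top)]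
      using h _ (memPV_dirac V a)
  have hmid := h _ (memPV_diracMid V x y)
  rw [integral_LopI_bConv_diracMid, hdiag, hdiag] at hmid
  linarith

variable {K ψ}

lemma measurable_pairL (hK : Measurable fun p : Ed d × Ed d => K p.1 p.2)
    (hψ : ContDiff ℝ 2 ψ) : Measurable fun p : Ed d × Ed d => pairL K ψ p.1 p.2 :=
  ((continuous_lap hψ).measurable.comp measurable_fst).sub
    (hK.inner ((continuous_gradient hψ).measurable.comp measurable_fst))

lemma abs_pairL_le {V : Ed d → ℝ} (hV1 : ∀ x, 1 ≤ V x) {γ : ℝ} (hγ : γ ≤ 1) {CK : ℝ}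
    (hK : ∀ x y, ‖K x y‖ ≤ CK * V x ^ (1 - γ)) {M : ℝ}
    (hψ : ∀ x, |ψ x| + ‖gradient ψ x‖ + ‖iteratedFDeriv ℝ 2 ψ x‖ ≤ M * V x ^ γ) (x y : Ed d) :
    |pairL K ψ x y| ≤ (d * M + CK * M) * V x := by
  have hVpos : 0 < V x := one_pos.trans_le (hV1 x)
  have hVγ : V x ^ γ ≤ V x := by simpa using Real.rpow_le_rpow_of_exponent_le (hV1 x) hγ
  have hCK : 0 ≤ CK * V x ^ (1 - γ) := (norm_nonneg _).trans (hK x y)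
  have hgrad : ‖gradient ψ x‖ ≤ M * V x ^ γ := by
    linarith [hψ x, abs_nonneg (ψ x), norm_nonneg (iteratedFDeriv ℝ 2 ψ x)]
  have hhess : ‖iteratedFDeriv ℝ 2 ψ x‖ ≤ M * V x ^ γ := by
    linarith [hψ x, abs_nonneg (ψ x), norm_nonneg (gradient ψ x)]
  have hM : 0 ≤ M := nonneg_of_mul_nonneg_left ((norm_nonneg _).trans hgrad)
    (Real.rpow_pos_of_pos hVpos γ)
  have hsplit : V x ^ (1 - γ) * V x ^ γ = V x := by
    rw [← Real.rpow_add hVpos]; simp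
  calc |pairL K ψ x y| ≤ |lap ψ x| + |⟪K x y, gradient ψ x⟫| := abs_sub _ _
    _ ≤ d * (M * V x ^ γ) + CK * V x ^ (1 - γ) * (M * V x ^ γ) := by
        gcongr
        · exact (abs_lap_le_norm_iteratedFDeriv ψ x).trans (by gcongr)
        · exact (abs_real_inner_le_norm _ _).trans (mul_le_mul (hK x y) hgrad (norm_nonneg _) hCK)
    _ = d * (M * V x ^ γ) + CK * M * (V x ^ (1 - γ) * V x ^ γ) := by ring
    _ ≤ d * (M * V x) + CK * M * V x := by rw [hsplit]; gcongr
    _ = (d * M + CK * M) * V x := by ring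

lemma integral_LopI_bConv_eq_zero {μ : Measure (Ed d)} [IsProbabilityMeasure μ]
    (hKx : ∀ x, Integrable (K x) μ)
    (hint : Integrable (fun p : Ed d × Ed d => pairL K ψ p.1 p.2) (μ.prod μ))
    (hanti : ∀ x y, pairL K ψ x y + pairL K ψ y x = 0) :
    ∫ x, LopI (bConv K μ) ψ x ∂μ = 0 := by
  calc ∫ x, LopI (bConv K μ) ψ x ∂μ = ∫ x, ∫ y, pairL K ψ x y ∂μ ∂μ :=
        integral_congr_ae (.of_forall fun x => LopI_bConv_eq_integral_pairL K ψ (hKx x))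
    _ = ∫ p, pairL K ψ p.1 p.2 ∂μ.prod μ := (integral_prod _ hint).symm
    _ = 0 := integral_prod_eq_zero_of_add_swap_eq_zero hanti

end PairDensity

lemma integrable_pairL_prod {V : Ed d → ℝ} (hV1 : ∀ x, 1 ≤ V x) {γ : ℝ} (hγ : γ ≤ 1)
    {K : Ed d → Ed d → Ed d} (hKmeas : Measurable fun p : Ed d × Ed d => K p.1 p.2) {CK : ℝ}
    (hK : ∀ x y, ‖K x y‖ ≤ CK * V x ^ (1 - γ)) {ψ : Ed d → ℝ} (hψC2 : ContDiff ℝ 2 ψ)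
    (hψ : GrowthW (fun x => V x ^ γ) ψ) {μ : Measure (Ed d)} (hμ : memPV V μ) :
    Integrable (fun p : Ed d × Ed d => pairL K ψ p.1 p.2) (μ.prod μ) := by
  obtain ⟨M, hM⟩ := hψ
  have := hμ.1
  refine ((hμ.2.comp_fst μ).const_mul (d * M + CK * M)).mono'
    (measurable_pairL hKmeas hψC2).aestronglyMeasurable (.of_forall fun p => ?_)
  exact abs_pairL_le hV1 hγ hK hM p.1 p.2

lemma integrable_kernel_of_norm_le {K : Ed d → Ed d → Ed d}
    (hKmeas : Measurable fun p : Ed d × Ed d => K p.1 p.2) {C : Ed d → ℝ}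
    (hK : ∀ x y, ‖K x y‖ ≤ C x) (μ : Measure (Ed d)) [IsFiniteMeasure μ] (x : Ed d) :
    Integrable (K x) μ :=
  (integrable_const (C x)).mono' (hKmeas.comp measurable_prodMk_left).aestronglyMeasurable
    (.of_forall (hK x))

lemma I0Wconv_iff_pairL_add_pairL_swap_eq_zero {V : Ed d → ℝ} (hV1 : ∀ x, 1 ≤ V x) {γ : ℝ}
    (hγ : γ ≤ 1) {K : Ed d → Ed d → Ed d}
    (hKmeas : Measurable fun p : Ed d × Ed d => K p.1 p.2) {CK : ℝ}
    (hK : ∀ x y, ‖K x y‖ ≤ CK * V x ^ (1 - γ)) {ψ : Ed d → ℝ} (hψC2 : ContDiff ℝ 2 ψ)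
    (hψ : GrowthW (fun x => V x ^ γ) ψ) :
    I0Wconv K V (fun x => V x ^ γ) ψ ↔ ∀ x y, pairL K ψ x y + pairL K ψ y x = 0 := by
  refine ⟨fun h => pairL_add_pairL_swap_eq_zero K ψ h.2.2, fun hanti => ⟨hψC2, hψ, ?_⟩⟩
  intro μ hμ
  have := hμ.1
  exact integral_LopI_bConv_eq_zero (integrable_kernel_of_norm_le hKmeas hK μ)
    (integrable_pairL_prod hV1 hγ hKmeas hK hψC2 hψ hμ) hanti

section Affine

variable {F : Type*} [NormedAddCommGroup F] [InnerProductSpace ℝ F] [CompleteSpace F]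
  (Q : F) (g : ℝ)

lemma hasFDerivAt_inner_add_const (x : F) :
    HasFDerivAt (fun x => ⟪Q, x⟫ + g) (InnerProductSpace.toDual ℝ F Q : F →L[ℝ] ℝ) x :=
  (InnerProductSpace.toDual ℝ F Q).hasFDerivAt.add_const g

lemma gradient_inner_add_const (x : F) : gradient (fun x => ⟪Q, x⟫ + g) x = Q :=
  (hasGradientAt_iff_hasFDerivAt.mpr (hasFDerivAt_inner_add_const Q g x)).gradient

lemma iteratedFDeriv_two_inner_add_const (x : F) :
    iteratedFDeriv ℝ 2 (fun x => ⟪Q, x⟫ + g) x = 0 := by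
  have hfderiv : fderiv ℝ (fun x => ⟪Q, x⟫ + g) =
      fun _ => (InnerProductSpace.toDual ℝ F Q : F →L[ℝ] ℝ) :=
    funext fun y => (hasFDerivAt_inner_add_const Q g y).fderiv
  rw [← norm_eq_zero, ← norm_iteratedFDeriv_fderiv, hfderiv,
    iteratedFDeriv_const_of_ne one_ne_zero]
  simp

end Affine

lemma lap_inner_add_const (Q : Ed d) (g : ℝ) (x : Ed d) : lap (fun x => ⟪Q, x⟫ + g) x = 0 := by
  simp [lap, hess2, iteratedFDeriv_two_inner_add_const]

lemma growthW_inner_add_const {W : Ed d → ℝ} (hW : ∃ M, ∀ x, 1 + ‖x‖ ≤ M * W x)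
    (Q : Ed d) (g : ℝ) : GrowthW W fun x => ⟪Q, x⟫ + g := by
  obtain ⟨M, hM⟩ := hW
  refine ⟨(‖Q‖ + |g|) * M, fun x => ?_⟩
  rw [gradient_inner_add_const, iteratedFDeriv_two_inner_add_const, norm_zero, add_zero,
    mul_assoc]
  calc |⟪Q, x⟫ + g| + ‖Q‖ ≤ ‖Q‖ * ‖x‖ + |g| + ‖Q‖ := by
        gcongr
        exact (abs_add_le _ _).trans (by gcongr; exact abs_real_inner_le_norm Q x)
    _ ≤ (‖Q‖ + |g|) * (1 + ‖x‖) := by nlinarith [norm_nonneg x, abs_nonneg g]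
    _ ≤ (‖Q‖ + |g|) * (M * W x) := by gcongr; exact hM x

theorem stmt5_I0W_characterization_general
    (V : Ed d → ℝ) (hV1 : ∀ x, 1 ≤ V x)
    (γ : ℝ) (hγ : γ ∈ Set.Ioc (0:ℝ) (1/2))
    (W : Ed d → ℝ) (hW : W = fun x => V x ^ γ)
    (K : Ed d → Ed d → Ed d)
    (hKmeas : Measurable fun p : Ed d × Ed d => K p.1 p.2)
    (CK : ℝ) (hKgrow : ∀ x y, ‖K x y‖ ≤ CK * V x ^ (1 - γ))
    (ψ : Ed d → ℝ) (hψC2 : ContDiff ℝ 2 ψ) (hψgrow : GrowthW W ψ) :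
    -- the equivalence
    (I0Wconv K V W ψ ↔
      ∀ x y : Ed d,
        lap ψ x + lap ψ y - ⟪K x y, gradient ψ x⟫ - ⟪K y x, gradient ψ y⟫ = 0)
    ∧
    -- "in particular"
    (I0Wconv K V W ψ → ∀ x, lap ψ x - ⟪K x x, gradient ψ x⟫ = 0)
    ∧
    -- the linear functions obtained from a skew-symmetry condition
    (∀ Q : Ed d, ∀ g : ℝ,
      (∀ x y, ⟪Q, K x y⟫ = -⟪Q, K y x⟫) →
      (∃ M : ℝ, ∀ x, 1 + ‖x‖ ≤ M * W x) →
      I0Wconv K V W (fun x => ⟪Q, x⟫ + g)) := by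
  subst hW
  have hγ1 : γ ≤ 1 := hγ.2.trans (by norm_num)
  have hiff := I0Wconv_iff_pairL_add_pairL_swap_eq_zero hV1 hγ1 hKmeas hKgrow hψC2 hψgrow
  simp only [pairL] at hiff
  refine ⟨hiff.trans (forall₂_congr fun x y => by ring_nf), fun h x => ?_, ?_⟩
  · linarith [hiff.mp h x x]
  · intro Q g hskew hgrowth
    have hC2 : ContDiff ℝ 2 fun x => ⟪Q, x⟫ + g := (innerSL ℝ Q).contDiff.add contDiff_const
    refine (I0Wconv_iff_pairL_add_pairL_swap_eq_zero hV1 hγ1 hKmeas hKgrow hC2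
      (growthW_inner_add_const hgrowth Q g)).mpr fun x y => ?_
    simp only [pairL, lap_inner_add_const, gradient_inner_add_const, real_inner_comm Q]
    linarith [hskew x y]

/-- **Proposition 2** : characterization of `I_0^W` for convolution drifts. -/
theorem stmt5_I0W_characterization
    (V : Ed d → ℝ) (hV : ContDiff ℝ 2 V) (hV1 : ∀ x, 1 ≤ V x)
    (hVinf : Tendsto V (cocompact (Ed d)) atTop)
    (γ : ℝ) (hγ : γ ∈ Set.Ioc (0:ℝ) (1/2))
    (W : Ed d → ℝ) (hW : W = fun x => V x ^ γ)
    (K : Ed d → Ed d → Ed d)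
    (hKmeas : Measurable fun p : Ed d × Ed d => K p.1 p.2)
    (CK : ℝ) (hKgrow : ∀ x y, ‖K x y‖ ≤ CK * V x ^ (1 - γ))
    (ψ : Ed d → ℝ) (hψC2 : ContDiff ℝ 2 ψ) (hψgrow : GrowthW W ψ) :
    -- the equivalence
    (I0Wconv K V W ψ ↔
      ∀ x y : Ed d,
        lap ψ x + lap ψ y - ⟪K x y, gradient ψ x⟫ - ⟪K y x, gradient ψ y⟫ = 0)
    ∧
    -- "in particular"
    (I0Wconv K V W ψ → ∀ x, lap ψ x - ⟪K x x, gradient ψ x⟫ = 0)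
    ∧
    -- the linear functions obtained from a skew-symmetry condition
    (∀ Q : Ed d, ∀ g : ℝ,
      (∀ x y, ⟪Q, K x y⟫ = -⟪Q, K y x⟫) →
      (∃ M : ℝ, ∀ x, 1 + ‖x‖ ≤ M * W x) →
      I0Wconv K V W (fun x => ⟪Q, x⟫ + g)) :=
  stmt5_I0W_characterization_general V hV1 γ hγ W hW K hKmeas CK hKgrow ψ hψC2 hψgrow
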